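/- arXiv:2207.02728 — 2 statements merged into one kernel-verified Lean document; each statement's English description precedes it below -/
import Mathlib

section
/- Over GF(2), the incidence vectors of an odd-town family are linearly independent. -/
open Finset

theorem dotProduct_boole_mem {R α : Type*} [NonAssocSemiring R] [Fintype α] [DecidableEq α]
    (s t : Finset α) :
    (fun p => if p ∈ s then (1 : R) else 0) ⬝ᵥ (fun p => if p ∈ t then 1 else 0) = #(s ∩ t) := by
  simp only [dotProduct, boole_mul, sum_ite_mem, univ_inter, sum_const, nsmul_one]

theorem odd_town_linear_independent (n m : ℕ) (Bl : Fin m → Finset (Fin n))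
    (hodd : ∀ i, Odd (Bl i).card)
    (heven : ∀ i j, i ≠ j → Even ((Bl i ∩ Bl j).card)) :
    LinearIndependent (ZMod 2)
      (fun i : Fin m => fun p : Fin n => if p ∈ Bl i then (1 : ZMod 2) else 0) := by
  refine LinearMap.linearIndependent_of_isOrthoᵢ (B := dotProductBilin (ZMod 2) (ZMod 2))
    (LinearMap.isOrthoᵢ_def.mpr fun i j hij => ?_) (fun i => ?_)
  · rw [dotProductBilin_apply_apply, dotProduct_boole_mem]
    exact ZMod.natCast_eq_zero_iff_even.mpr (heven i j hij)
  · rw [dotProductBilin_apply_apply, dotProduct_boole_mem, inter_self,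
      (hodd i).natCast_zmod_two]
    exact one_ne_zero
end

section
/- Generalised Fisher's inequality: if A_1,...,A_m are distinct subsets of {1,...,n} with |A_i ∩ A_j| = k for some fixed 1 ≤ k ≤ n and all i ≠ j, then m ≤ n. -/
/-!
View each set as its indicator vector in `ℝⁿ`. Their Gram matrix is `k J + D`, where `J` is the
all-ones matrix and `D` is diagonal with entries `|A i| - k ≥ 0`, so for coefficients `c`
we get `‖∑ cᵢ vᵢ‖² = k (∑ cᵢ)² + ∑ cᵢ² (|A i| - k)`. At most one set has exactly `k` elements
(two of them would both equal their intersection), so a vanishing combination has `∑ cᵢ = 0` and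
at most one nonzero coefficient, hence none. The indicator vectors are therefore linearly
independent, and there are at most `n` of them.
-/

open Finset RealInnerProductSpace

section InnerProductSpace

variable {ι E : Type*} [Fintype ι] [NormedAddCommGroup E] [InnerProductSpace ℝ E]

theorem norm_sum_smul_sq_of_inner_eq_const {v : ι → E} {k : ℝ}
    (hinner : ∀ i j, i ≠ j → ⟪v i, v j⟫ = k) (c : ι → ℝ) :
    ‖∑ i, c i • v i‖ ^ 2 = k * (∑ i, c i) ^ 2 + ∑ i, c i ^ 2 * (‖v i‖ ^ 2 - k) := by
  classical
  have hterm : ∀ i j, c i * c j * ⟪v i, v j⟫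
      = k * (c i * c j) + if i = j then c i ^ 2 * (‖v i‖ ^ 2 - k) else 0 := by
    intro i j
    rcases eq_or_ne i j with rfl | hij
    · rw [real_inner_self_eq_norm_sq, if_pos rfl]; ring
    · rw [hinner i j hij, if_neg hij]; ring
  calc ‖∑ i, c i • v i‖ ^ 2 = ∑ i, ∑ j, c i * c j * ⟪v i, v j⟫ := by
        simp only [← real_inner_self_eq_norm_sq, inner_sum, sum_inner, real_inner_smul_left,
          real_inner_smul_right, mul_assoc]
        rw [sum_comm]
        exact sum_congr rfl fun i _ ↦ sum_congr rfl fun j _ ↦ mul_left_comm _ _ _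
    _ = k * (∑ i, c i) ^ 2 + ∑ i, c i ^ 2 * (‖v i‖ ^ 2 - k) := by
        rw [sq (∑ i, c i), sum_mul_sum, mul_sum]
        simp only [hterm, sum_add_distrib, sum_ite_eq, mem_univ, if_true, mul_sum]

theorem linearIndependent_of_inner_eq_const {v : ι → E} {k : ℝ} (hk : 0 < k)
    (hinner : ∀ i j, i ≠ j → ⟪v i, v j⟫ = k) (hle : ∀ i, k ≤ ‖v i‖ ^ 2)
    (hmin : {i | ‖v i‖ ^ 2 = k}.Subsingleton) : LinearIndependent ℝ v := by
  rw [Fintype.linearIndependent_iff]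
  intro c hc
  have hsum := norm_sum_smul_sq_of_inner_eq_const hinner c
  rw [hc, norm_zero, zero_pow two_ne_zero] at hsum
  have hnonneg : ∀ i ∈ univ, 0 ≤ c i ^ 2 * (‖v i‖ ^ 2 - k) :=
    fun i _ ↦ mul_nonneg (sq_nonneg _) (sub_nonneg.mpr (hle i))
  have hrest := sum_nonneg hnonneg
  have hS : ∑ i, c i = 0 := by
    have : k * (∑ i, c i) ^ 2 = 0 := by nlinarith [sq_nonneg (∑ i, c i)]
    simpa [hk.ne'] using this
  have hsupp : ∀ i, c i ≠ 0 → ‖v i‖ ^ 2 = k := by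
    intro i hci
    have hi := (sum_eq_zero_iff_of_nonneg hnonneg).mp (by nlinarith [sq_nonneg (∑ i, c i)]) i
      (mem_univ i)
    linarith [(mul_eq_zero.mp hi).resolve_left (pow_ne_zero 2 hci)]
  by_contra! ⟨i, hci⟩
  refine hci ?_
  rw [← hS, sum_eq_single i]
  · intro j _ hji
    by_contra hcj
    exact hji (hmin (hsupp j hcj) (hsupp i hci))
  · simp

end InnerProductSpace

namespace Finset

variable {ι α : Type*} [DecidableEq α]

def indicatorVec (s : Finset α) : EuclideanSpace ℝ α :=
  WithLp.toLp 2 fun x ↦ if x ∈ s then 1 else 0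

theorem inner_indicatorVec [Fintype α] (s t : Finset α) :
    ⟪s.indicatorVec, t.indicatorVec⟫ = #(s ∩ t) := by
  simp [indicatorVec, PiLp.inner_apply, ← ite_and, ← mem_inter]

theorem norm_indicatorVec_sq [Fintype α] (s : Finset α) : ‖s.indicatorVec‖ ^ 2 = #s := by
  rw [← real_inner_self_eq_norm_sq, inner_indicatorVec, inter_self]

section ConstantIntersections

variable {A : ι → Finset α} {k : ℕ} (hint : ∀ i j, i ≠ j → #(A i ∩ A j) = k)
include hint

theorem le_card_of_card_inter_eq [Nontrivial ι] (i : ι) : k ≤ #(A i) := by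
  obtain ⟨j, hji⟩ := exists_ne i
  exact hint i j hji.symm ▸ card_le_card inter_subset_left

theorem subsingleton_card_eq_of_card_inter_eq (hA : Function.Injective A) :
    {i | #(A i) = k}.Subsingleton := by
  intro i hi j hj
  by_contra hij
  have hle : #(A i ∩ A j) ≥ k := (hint i j hij).ge
  exact hij (hA ((eq_of_subset_of_card_le inter_subset_left (hi ▸ hle)).symm.trans
    (eq_of_subset_of_card_le inter_subset_right (hj ▸ hle))))

theorem card_le_card_of_card_inter_eq [Fintype ι] [Fintype α] [Nontrivial ι]
    (hA : Function.Injective A) (hk : 0 < k) : Fintype.card ι ≤ Fintype.card α := by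
  have hli : LinearIndependent ℝ fun i ↦ (A i).indicatorVec := by
    refine linearIndependent_of_inner_eq_const (k := k) (by exact_mod_cast hk) ?_ ?_ ?_
    · intro i j hij
      rw [inner_indicatorVec, hint i j hij]
    · intro i
      rw [norm_indicatorVec_sq]
      exact_mod_cast le_card_of_card_inter_eq hint i
    · simpa only [norm_indicatorVec_sq, Nat.cast_inj] using
        subsingleton_card_eq_of_card_inter_eq hint hA
  simpa using hli.fintype_card_le_finrank

end ConstantIntersections

end Finset

theorem generalised_fishers_inequality (n m k : ℕ) (hk1 : 1 ≤ k) (hkn : k ≤ n)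
    (A : Fin m → Finset (Fin n)) (hdist : Function.Injective A)
    (hint : ∀ i j, i ≠ j → (A i ∩ A j).card = k) :
    m ≤ n := by
  rcases le_or_gt m 1 with hm | hm
  · exact hm.trans (hk1.trans hkn)
  have : Nontrivial (Fin m) := Fin.nontrivial_iff_two_le.mpr hm
  simpa using card_le_card_of_card_inter_eq hint hdist hk1
end
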